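/- Let S, P_A, P_B, P_C be unital complex algebras, let ω be a linear functional on S and σ_A, σ_B, σ_C linear functionals on P_A, P_B, P_C with σ_A(1) = σ_C(1) = 1, and let Θ_A, Θ_B, Θ_C be unital algebra automorphisms of S⊗P_A, S⊗P_B, S⊗P_C. On S⊗P_A⊗P_B⊗P_C let Θ̂_A, Θ̂_B, Θ̂_C denote the extensions acting on the system factor together with the second, third and fourth tensor factor respectively, and trivially on the remaining factors. Then for every O_B ∈ P_B: (ω⊗σ_A⊗σ_B⊗σ_C)((Θ̂_A ∘ Θ̂_B ∘ Θ̂_C)(1⊗1⊗O_B⊗1)) = J_A(ω)(ε_B(O_B)), where ε_B(O) := (id_S⊗σ_B)(Θ_B(1⊗O)) and J_A(ω)(C) := (ω⊗σ_A)(Θ_A(C⊗1)). That is, in the causal order A ≤ B ≤ C, observer B's expected outcome is obtained by updating the state by A's measurement, and the later observer C can be completely ignored. -/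

import Mathlib

open scoped TensorProduct

noncomputable section

variable {S PA PB : Type*} [Ring S] [Algebra ℂ S]
  [Ring PA] [Algebra ℂ PA] [Ring PB] [Algebra ℂ PB]

/-- The tensor product `ω ⊗ σ` of two linear functionals, determined by
`(ω ⊗ σ)(a ⊗ b) = ω a * σ b`. -/
def tensorFunctional {A B : Type*} [Ring A] [Algebra ℂ A]
    [Ring B] [Algebra ℂ B] (ω : A →ₗ[ℂ] ℂ) (σ : B →ₗ[ℂ] ℂ) :
    A ⊗[ℂ] B →ₗ[ℂ] ℂ :=
  (TensorProduct.lid ℂ ℂ).toLinearMap.comp (TensorProduct.map ω σ)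

/-- The partial trace `id_S ⊗ σ : S ⊗ P →ₗ S`, determined by `a ⊗ b ↦ σ(b) • a`. -/
def idTensorFunctional (S : Type*) [Ring S] [Algebra ℂ S] {P : Type*}
    [Ring P] [Algebra ℂ P] (σ : P →ₗ[ℂ] ℂ) : S ⊗[ℂ] P →ₗ[ℂ] S :=
  (TensorProduct.rid ℂ S).toLinearMap.comp (TensorProduct.map LinearMap.id σ)

/-- The rearrangement isomorphism `(S ⊗ P_A) ⊗ P_B ≃ (S ⊗ P_B) ⊗ P_A`
exchanging the two probe factors. -/
def probeSwap (S PA PB : Type*) [Ring S] [Algebra ℂ S]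
    [Ring PA] [Algebra ℂ PA] [Ring PB] [Algebra ℂ PB] :
    ((S ⊗[ℂ] PA) ⊗[ℂ] PB) ≃ₐ[ℂ] ((S ⊗[ℂ] PB) ⊗[ℂ] PA) :=
  (Algebra.TensorProduct.assoc ℂ ℂ ℂ S PA PB).trans
    ((Algebra.TensorProduct.congr AlgEquiv.refl
        (Algebra.TensorProduct.comm ℂ PA PB)).trans
      (Algebra.TensorProduct.assoc ℂ ℂ ℂ S PB PA).symm)

/-- The extension `Θ̂_A` of an automorphism `Θ_A` of `S ⊗ P_A` to
`(S ⊗ P_A) ⊗ P_B`, acting trivially on `P_B`. -/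
def hatA (ΘA : (S ⊗[ℂ] PA) ≃ₐ[ℂ] (S ⊗[ℂ] PA)) :
    ((S ⊗[ℂ] PA) ⊗[ℂ] PB) ≃ₐ[ℂ] ((S ⊗[ℂ] PA) ⊗[ℂ] PB) :=
  Algebra.TensorProduct.congr ΘA AlgEquiv.refl

/-- The extension `Θ̂_B` of an automorphism `Θ_B` of `S ⊗ P_B` to
`(S ⊗ P_A) ⊗ P_B`, acting on the first and third tensor factors and trivially
on `P_A`. -/
def hatB (ΘB : (S ⊗[ℂ] PB) ≃ₐ[ℂ] (S ⊗[ℂ] PB)) :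
    ((S ⊗[ℂ] PA) ⊗[ℂ] PB) ≃ₐ[ℂ] ((S ⊗[ℂ] PA) ⊗[ℂ] PB) :=
  (probeSwap S PA PB).trans ((Algebra.TensorProduct.congr ΘB AlgEquiv.refl).trans
    (probeSwap S PA PB).symm)

/-- The induced system observable `ε(O) = (id_S ⊗ σ)(Θ (1 ⊗ O))` of a probe
observable `O`. -/
def inducedObservable {P : Type*} [Ring P] [Algebra ℂ P] (σ : P →ₗ[ℂ] ℂ)
    (Θ : (S ⊗[ℂ] P) ≃ₐ[ℂ] (S ⊗[ℂ] P)) (O : P) : S :=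
  idTensorFunctional S σ (Θ ((1 : S) ⊗ₜ[ℂ] O))

variable {PC : Type*} [Ring PC] [Algebra ℂ PC]

/-- The non-selective state-update map `J(ω) : C ↦ (ω ⊗ σ)(Θ (C ⊗ 1))`. -/
def updateMap {P : Type*} [Ring P] [Algebra ℂ P] (σ : P →ₗ[ℂ] ℂ)
    (Θ : (S ⊗[ℂ] P) ≃ₐ[ℂ] (S ⊗[ℂ] P)) (ω : S →ₗ[ℂ] ℂ) : S →ₗ[ℂ] ℂ :=
  (tensorFunctional ω σ).comp (Θ.toLinearMap.comp ((TensorProduct.mk ℂ S P).flip (1 : P)))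

/-- The extension of `Θ_A` to `S ⊗ P_A ⊗ P_B ⊗ P_C`, acting on the system
factor and the second tensor factor. -/
def hat4A (ΘA : (S ⊗[ℂ] PA) ≃ₐ[ℂ] (S ⊗[ℂ] PA)) :
    (((S ⊗[ℂ] PA) ⊗[ℂ] PB) ⊗[ℂ] PC) ≃ₐ[ℂ] (((S ⊗[ℂ] PA) ⊗[ℂ] PB) ⊗[ℂ] PC) :=
  Algebra.TensorProduct.congr (hatA ΘA) AlgEquiv.refl

/-- The extension of `Θ_B` to `S ⊗ P_A ⊗ P_B ⊗ P_C`, acting on the system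
factor and the third tensor factor. -/
def hat4B (ΘB : (S ⊗[ℂ] PB) ≃ₐ[ℂ] (S ⊗[ℂ] PB)) :
    (((S ⊗[ℂ] PA) ⊗[ℂ] PB) ⊗[ℂ] PC) ≃ₐ[ℂ] (((S ⊗[ℂ] PA) ⊗[ℂ] PB) ⊗[ℂ] PC) :=
  Algebra.TensorProduct.congr (hatB ΘB) AlgEquiv.refl

/-- The extension of `Θ_C` to `S ⊗ P_A ⊗ P_B ⊗ P_C`, acting on the system
factor and the fourth tensor factor. -/
def hat4C (ΘC : (S ⊗[ℂ] PC) ≃ₐ[ℂ] (S ⊗[ℂ] PC)) :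
    (((S ⊗[ℂ] PA) ⊗[ℂ] PB) ⊗[ℂ] PC) ≃ₐ[ℂ] (((S ⊗[ℂ] PA) ⊗[ℂ] PB) ⊗[ℂ] PC) :=
  (probeSwap (S ⊗[ℂ] PA) PB PC).trans
    ((Algebra.TensorProduct.congr (hatB ΘC) AlgEquiv.refl).trans
      (probeSwap (S ⊗[ℂ] PA) PB PC).symm)

/-!
`Θ̂_C` fixes `1 ⊗ 1 ⊗ O_B ⊗ 1` because `Θ_C` is unital, and `σ_C(1) = 1` then removes the
`P_C` factor. The remaining expression is linear in `Θ_B(1 ⊗ O_B) ∈ S ⊗ P_B`, and on an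
elementary tensor `s ⊗ b` both sides equal `σ_B(b) · J_A(ω)(s)`.
-/

section Functionals

variable {A B : Type*} [Ring A] [Algebra ℂ A] [Ring B] [Algebra ℂ B]

@[simp]
lemma tensorFunctional_tmul (ω : A →ₗ[ℂ] ℂ) (σ : B →ₗ[ℂ] ℂ) (a : A) (b : B) :
    tensorFunctional ω σ (a ⊗ₜ[ℂ] b) = ω a * σ b := by
  simp [tensorFunctional]

@[simp]
lemma idTensorFunctional_tmul (σ : B →ₗ[ℂ] ℂ) (a : A) (b : B) :
    idTensorFunctional A σ (a ⊗ₜ[ℂ] b) = σ b • a := by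
  simp [idTensorFunctional]

lemma tensorFunctional_tmul_one (ω : A →ₗ[ℂ] ℂ) {σ : B →ₗ[ℂ] ℂ} (hσ : σ 1 = 1) (a : A) :
    tensorFunctional ω σ (a ⊗ₜ[ℂ] 1) = ω a := by
  rw [tensorFunctional_tmul, hσ, mul_one]

lemma tensorFunctional_eq_comp_idTensorFunctional (ω : A →ₗ[ℂ] ℂ) (σ : B →ₗ[ℂ] ℂ) :
    tensorFunctional ω σ = ω ∘ₗ idTensorFunctional A σ :=
  TensorProduct.ext' fun a b => by simp [mul_comm]

end Functionals

section Extensions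

variable (ΘA : (S ⊗[ℂ] PA) ≃ₐ[ℂ] (S ⊗[ℂ] PA)) (ΘB : (S ⊗[ℂ] PB) ≃ₐ[ℂ] (S ⊗[ℂ] PB))
  (ΘC : (S ⊗[ℂ] PC) ≃ₐ[ℂ] (S ⊗[ℂ] PC))

@[simp]
lemma probeSwap_tmul (s : S) (a : PA) (b : PB) :
    probeSwap S PA PB ((s ⊗ₜ[ℂ] a) ⊗ₜ[ℂ] b) = (s ⊗ₜ[ℂ] b) ⊗ₜ[ℂ] a := by
  simp [probeSwap, Algebra.TensorProduct.congr_apply]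

@[simp]
lemma probeSwap_symm_tmul (s : S) (b : PB) (a : PA) :
    (probeSwap S PA PB).symm ((s ⊗ₜ[ℂ] b) ⊗ₜ[ℂ] a) = (s ⊗ₜ[ℂ] a) ⊗ₜ[ℂ] b := by
  rw [AlgEquiv.symm_apply_eq, probeSwap_tmul]

lemma hatA_tmul (x : S ⊗[ℂ] PA) (b : PB) : hatA ΘA (x ⊗ₜ[ℂ] b) = ΘA x ⊗ₜ[ℂ] b :=
  rfl

lemma hatB_tmul (s : S) (a : PA) (b : PB) :
    hatB ΘB ((s ⊗ₜ[ℂ] a) ⊗ₜ[ℂ] b) = (probeSwap S PA PB).symm (ΘB (s ⊗ₜ[ℂ] b) ⊗ₜ[ℂ] a) := by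
  simp only [hatB, AlgEquiv.trans_apply, probeSwap_tmul]
  rfl

lemma hat4A_tmul (x : (S ⊗[ℂ] PA) ⊗[ℂ] PB) (c : PC) :
    hat4A ΘA (x ⊗ₜ[ℂ] c) = hatA ΘA x ⊗ₜ[ℂ] c :=
  rfl

lemma hat4B_tmul (x : (S ⊗[ℂ] PA) ⊗[ℂ] PB) (c : PC) :
    hat4B ΘB (x ⊗ₜ[ℂ] c) = hatB ΘB x ⊗ₜ[ℂ] c :=
  rfl

lemma hat4C_tmul (z : S ⊗[ℂ] PA) (b : PB) (c : PC) :
    hat4C ΘC ((z ⊗ₜ[ℂ] b) ⊗ₜ[ℂ] c) =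
      (probeSwap _ PB PC).symm (hatB ΘC (z ⊗ₜ[ℂ] c) ⊗ₜ[ℂ] b) := by
  simp only [hat4C, AlgEquiv.trans_apply, probeSwap_tmul]
  rfl

lemma hat4C_one_tmul_one (b : PB) :
    hat4C (PA := PA) ΘC ((((1 : S) ⊗ₜ[ℂ] (1 : PA)) ⊗ₜ[ℂ] b) ⊗ₜ[ℂ] (1 : PC))
      = (((1 : S) ⊗ₜ[ℂ] (1 : PA)) ⊗ₜ[ℂ] b) ⊗ₜ[ℂ] (1 : PC) := by
  rw [hat4C_tmul, ← Algebra.TensorProduct.one_def, ← Algebra.TensorProduct.one_def, map_one,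
    Algebra.TensorProduct.one_def, probeSwap_symm_tmul]

lemma tensorFunctional_hatA_probeSwap_symm (ω : S →ₗ[ℂ] ℂ) (σA : PA →ₗ[ℂ] ℂ)
    (σB : PB →ₗ[ℂ] ℂ) (y : S ⊗[ℂ] PB) :
    tensorFunctional (tensorFunctional ω σA) σB
        (hatA ΘA ((probeSwap S PA PB).symm (y ⊗ₜ[ℂ] 1)))
      = tensorFunctional (updateMap σA ΘA ω) σB y := by
  induction y using TensorProduct.induction_on with
  | zero => simp
  | tmul s b => simp [hatA_tmul, updateMap]
  | add x y hx hy => simp only [TensorProduct.add_tmul, map_add, hx, hy]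

end Extensions

theorem three_observers_middle_expectation_general
    (ω : S →ₗ[ℂ] ℂ) (σA : PA →ₗ[ℂ] ℂ) (σB : PB →ₗ[ℂ] ℂ) (σC : PC →ₗ[ℂ] ℂ)
    (hσC : σC 1 = 1)
    (ΘA : (S ⊗[ℂ] PA) ≃ₐ[ℂ] (S ⊗[ℂ] PA)) (ΘB : (S ⊗[ℂ] PB) ≃ₐ[ℂ] (S ⊗[ℂ] PB))
    (ΘC : (S ⊗[ℂ] PC) ≃ₐ[ℂ] (S ⊗[ℂ] PC)) (OB : PB) :
    tensorFunctional (tensorFunctional (tensorFunctional ω σA) σB) σC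
      ((hat4A ΘA) ((hat4B ΘB) ((hat4C ΘC)
        ((((1 : S) ⊗ₜ[ℂ] (1 : PA)) ⊗ₜ[ℂ] OB) ⊗ₜ[ℂ] (1 : PC)))))
    = updateMap σA ΘA ω (inducedObservable σB ΘB OB) := by
  rw [hat4C_one_tmul_one, hat4B_tmul, hat4A_tmul, tensorFunctional_tmul_one _ hσC, hatB_tmul,
    tensorFunctional_hatA_probeSwap_symm, tensorFunctional_eq_comp_idTensorFunctional]
  rfl

/-- In the causal order `A ≤ B ≤ C`, observer `B`'s expected outcome is the
expectation of `B`'s induced observable in the state updated by `A`'s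
measurement; the later observer `C` can be completely ignored:
`(ω ⊗ σ_A ⊗ σ_B ⊗ σ_C)((Θ̂_A ∘ Θ̂_B ∘ Θ̂_C)(1 ⊗ 1 ⊗ O_B ⊗ 1)) = J_A(ω)(ε_B(O_B))`. -/
theorem three_observers_middle_expectation
    (ω : S →ₗ[ℂ] ℂ) (σA : PA →ₗ[ℂ] ℂ) (σB : PB →ₗ[ℂ] ℂ) (σC : PC →ₗ[ℂ] ℂ)
    (hσA : σA 1 = 1) (hσC : σC 1 = 1)
    (ΘA : (S ⊗[ℂ] PA) ≃ₐ[ℂ] (S ⊗[ℂ] PA)) (ΘB : (S ⊗[ℂ] PB) ≃ₐ[ℂ] (S ⊗[ℂ] PB))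
    (ΘC : (S ⊗[ℂ] PC) ≃ₐ[ℂ] (S ⊗[ℂ] PC)) (OB : PB) :
    tensorFunctional (tensorFunctional (tensorFunctional ω σA) σB) σC
      ((hat4A ΘA) ((hat4B ΘB) ((hat4C ΘC)
        ((((1 : S) ⊗ₜ[ℂ] (1 : PA)) ⊗ₜ[ℂ] OB) ⊗ₜ[ℂ] (1 : PC)))))
    = updateMap σA ΘA ω (inducedObservable σB ΘB OB) :=
  three_observers_middle_expectation_general ω σA σB σC hσC ΘA ΘB ΘC OB

end
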